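/- arXiv:2507.18207 — 4 statements merged into one kernel-verified Lean document; each statement's English description precedes it below -/
import Mathlib

section
/- Let Y > 0 almost surely, W a random vector, φ ≥ 0 measurable, 0 < s̃ ≤ s, and let L : ℝ → ℝ be nondecreasing and bounded. Define X = Y·1_{Y ≤ s} + sφ(W)·1_{Y > s}, X* = Y·1_{sφ(W) ≤ s̃} + sφ(W)·1_{sφ(W) > s̃}, and E₋ = {Y ≤ s and sφ(W) > s̃}. Then for every real number a, E[L(X*/Y − a)] ≥ E[L(X/Y − a)] − (L(1 − a) − L(−a))·P(E₋). -/
/-!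
Off `E₋` the index-triggered payoff dominates the hybrid one: if `sφ(W) ≤ s̃` it pays the full
loss `Y`, which is at least `sφ(W)` whenever the hybrid contract pays that (then `Y > s ≥ s̃`),
and if `sφ(W) > s̃` then `Y > s` and both pay `sφ(W)`. On `E₋` the hybrid ratio is `1` while the
index ratio is still `≥ 0`, so by monotonicity of `L` the utility drops there by at most
`L(1 − a) − L(−a)`. Integrating this pointwise bound gives the claim.
-/

open MeasureTheory

section Pointwise

variable {y p s stilde : ℝ}

lemma hybrid_payoff_le_index_payoff (hss : stilde ≤ s) (hE : ¬ (y ≤ s ∧ stilde < p)) :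
    (if y ≤ s then y else p) ≤ (if p ≤ stilde then y else p) := by
  by_cases hp : p ≤ stilde
  · rw [if_pos hp]
    split_ifs with hy
    · exact le_rfl
    · linarith [not_le.mp hy]
  · have hy : ¬ y ≤ s := fun hy => hE ⟨hy, not_le.mp hp⟩
    rw [if_neg hp, if_neg hy]

lemma utility_hybrid_ratio_le_utility_index_ratio_add {L : ℝ → ℝ} (hL : Monotone L) (a : ℝ)
    (hy : 0 < y) (hst : 0 ≤ stilde) (hss : stilde ≤ s) :
    L ((if y ≤ s then y else p) / y - a) ≤
      L ((if p ≤ stilde then y else p) / y - a) +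
        if y ≤ s ∧ stilde < p then L (1 - a) - L (-a) else 0 := by
  by_cases hE : y ≤ s ∧ stilde < p
  · rw [if_pos hE, if_pos hE.1, div_self hy.ne', if_neg (not_le.mpr hE.2)]
    have hratio : 0 ≤ p / y := div_nonneg (hst.trans hE.2.le) hy.le
    have := hL (show -a ≤ p / y - a by linarith)
    linarith
  · rw [if_neg hE, add_zero]
    exact hL (sub_le_sub_right
      (div_le_div_of_nonneg_right (hybrid_payoff_le_index_payoff hss hE) hy.le) a)

end Pointwise

section Integral

variable {Ω : Type*} [MeasurableSpace Ω] {μ : Measure Ω} [IsFiniteMeasure μ]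

lemma integrable_comp_of_abs_le {L : ℝ → ℝ} {M : ℝ} (hL : Measurable L) (hM : ∀ x, |L x| ≤ M)
    {h : Ω → ℝ} (hh : Measurable h) : Integrable (fun ω => L (h ω)) μ :=
  .of_bound (hL.comp hh).aestronglyMeasurable M (.of_forall fun ω => hM (h ω))

lemma integral_le_integral_add_mul_measureReal {f g : Ω → ℝ} {E : Set Ω}
    (hf : Integrable f μ) (hg : Integrable g μ) (hE : MeasurableSet E) (c : ℝ)
    (hgf : g ≤ᵐ[μ] f + E.indicator fun _ => c) :
    ∫ ω, g ω ∂μ ≤ ∫ ω, f ω ∂μ + c * μ.real E :=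
  calc ∫ ω, g ω ∂μ ≤ ∫ ω, (f + E.indicator fun _ => c) ω ∂μ :=
        integral_mono_ae hg (hf.add ((integrable_const c).indicator hE)) hgf
    _ = ∫ ω, f ω ∂μ + c * μ.real E := by
        rw [Pi.add_def, integral_add hf ((integrable_const c).indicator hE),
          integral_indicator_const c hE, smul_eq_mul, mul_comm]

end Integral

theorem statement1_general {Ω D : Type*} [MeasurableSpace Ω] [MeasurableSpace D]
    (μ : Measure Ω) [IsProbabilityMeasure μ]
    (Y : Ω → ℝ) (W : Ω → D) (φ : D → ℝ)
    (hY : Measurable Y) (hW : Measurable W) (hφ : Measurable φ)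
    (hYpos : ∀ᵐ ω ∂μ, 0 < Y ω)
    (s stilde : ℝ) (hst : 0 < stilde) (hss : stilde ≤ s)
    (L : ℝ → ℝ) (hLmono : Monotone L) (hLbdd : ∃ M, ∀ x, |L x| ≤ M)
    (a : ℝ) :
    ∫ ω, L ((if s * φ (W ω) ≤ stilde then Y ω else s * φ (W ω)) / Y ω - a) ∂μ
      ≥ (∫ ω, L ((if Y ω ≤ s then Y ω else s * φ (W ω)) / Y ω - a) ∂μ)
        - (L (1 - a) - L (-a)) *
            (μ {ω | Y ω ≤ s ∧ stilde < s * φ (W ω)}).toReal := by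
  obtain ⟨M, hM⟩ := hLbdd
  have hsφ : Measurable fun ω => s * φ (W ω) := measurable_const.mul (hφ.comp hW)
  have hXstar :
      Measurable fun ω => (if s * φ (W ω) ≤ stilde then Y ω else s * φ (W ω)) / Y ω - a :=
    ((Measurable.ite (measurableSet_le hsφ measurable_const) hY hsφ).div hY).sub_const a
  have hX : Measurable fun ω => (if Y ω ≤ s then Y ω else s * φ (W ω)) / Y ω - a :=
    ((Measurable.ite (measurableSet_le hY measurable_const) hY hsφ).div hY).sub_const a
  have hE : MeasurableSet {ω | Y ω ≤ s ∧ stilde < s * φ (W ω)} :=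
    (measurableSet_le hY measurable_const).inter (measurableSet_lt measurable_const hsφ)
  have key := integral_le_integral_add_mul_measureReal
    (integrable_comp_of_abs_le hLmono.measurable hM hXstar)
    (integrable_comp_of_abs_le hLmono.measurable hM hX) hE (L (1 - a) - L (-a)) (by
      filter_upwards [hYpos] with ω hω
      simpa only [Pi.add_apply, Set.indicator_apply, Set.mem_ofPred_eq] using
        utility_hybrid_ratio_le_utility_index_ratio_add hLmono a hω hst.le hss)
  rw [measureReal_def] at key
  linarith

/-- For a nondecreasing bounded utility `L` and every penalty level `a`,
the expected utility of the compensation ratio of the index-triggered contract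
`X* = Y·1_{sφ(W) ≤ s̃} + sφ(W)·1_{sφ(W) > s̃}` is at least that of the hybrid contract
`X = Y·1_{Y ≤ s} + sφ(W)·1_{Y > s}` minus `(L(1 − a) − L(−a))·P(E₋)`, where
`E₋ = {Y ≤ s and sφ(W) > s̃}`. -/
theorem statement1 {Ω D : Type*} [MeasurableSpace Ω] [MeasurableSpace D]
    (μ : Measure Ω) [IsProbabilityMeasure μ]
    (Y : Ω → ℝ) (W : Ω → D) (φ : D → ℝ)
    (hY : Measurable Y) (hW : Measurable W) (hφ : Measurable φ)
    (hYpos : ∀ᵐ ω ∂μ, 0 < Y ω) (hφpos : ∀ x, 0 ≤ φ x)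
    (s stilde : ℝ) (hst : 0 < stilde) (hss : stilde ≤ s)
    (L : ℝ → ℝ) (hLmono : Monotone L) (hLbdd : ∃ M, ∀ x, |L x| ≤ M)
    (a : ℝ) :
    ∫ ω, L ((if s * φ (W ω) ≤ stilde then Y ω else s * φ (W ω)) / Y ω - a) ∂μ
      ≥ (∫ ω, L ((if Y ω ≤ s then Y ω else s * φ (W ω)) / Y ω - a) ∂μ)
        - (L (1 - a) - L (-a)) *
            (μ {ω | Y ω ≤ s ∧ stilde < s * φ (W ω)}).toReal :=
  statement1_general μ Y W φ hY hW hφ hYpos s stilde hst hss L hLmono hLbdd a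
end

section
/- Let Y > 0 be a random variable with a continuous density p on (0, ∞) and survival function S_Y(t) = P(Y > t), let L : ℝ → ℝ be continuously differentiable, nondecreasing, with L and L′ bounded and L′ continuous, and let f : ℝ → ℝ be continuously differentiable with f′ continuous. Define π(s) = ∫₀^s S_Y(t) dt and 𝔏(s) = E[L(min(Y, s)/Y − f(π(s)))]. Then 𝔏 is differentiable on (0, ∞) with 𝔏′(s) = −S_Y(s)·f′(π(s))·(1 − S_Y(s))·L′(1 − f(π(s))) + ∫_s^∞ L′(s/t − f(π(s)))·[1/t − S_Y(s)·f′(π(s))]·p(t) dt. -/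
/-!
The premium `π` is `1`-Lipschitz, and since `Y` has a density its survival function is
continuous, so `π' = S_Y`. Transporting the expectation to the law of `Y`,
`𝔏(x) = ∫₀^∞ L(min(t, x)/t − f(π(x))) p(t) dt`. For `x` near `s` the argument of `L` stays in
a compact interval and `x ↦ min(t, x)/t` is `2/s`-Lipschitz uniformly in `t`, so the integrand
is Lipschitz in `x` with constant `C · p(t)`; for every `t ≠ s` it is differentiable at `s`.
Differentiating under the integral sign and splitting at `t = s`, the part `t < s`, where the
integrand is `L(1 − f(π(x))) p(t)`, contributes the first term because `∫₀^s p = 1 − S_Y(s)`.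
-/

open MeasureTheory Set

/-- Survival function `S_Y(t) = P(Y > t)` of a random variable `Y`. -/
noncomputable def survival {Ω : Type*} [MeasurableSpace Ω] (μ : Measure Ω)
    (Y : Ω → ℝ) (t : ℝ) : ℝ :=
  (μ {ω | t < Y ω}).toReal

/-- Pure premium `π(s) = ∫₀^s S_Y(t) dt = E[min(Y, s)]` of the capped contract. -/
noncomputable def cappedPremium {Ω : Type*} [MeasurableSpace Ω] (μ : Measure Ω)
    (Y : Ω → ℝ) (s : ℝ) : ℝ :=
  ∫ t in Ioc (0:ℝ) s, survival μ Y t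

/-- Objective `𝔏(s) = E[L(min(Y, s)/Y − f(π(s)))]` of the capped contract. -/
noncomputable def cappedObjective {Ω : Type*} [MeasurableSpace Ω] (μ : Measure Ω)
    (Y : Ω → ℝ) (L f : ℝ → ℝ) (s : ℝ) : ℝ :=
  ∫ ω, L (min (Y ω) s / Y ω - f (cappedPremium μ Y s)) ∂μ

open Metric Filter
open scoped ENNReal NNReal Topology

section Survival

variable {Ω : Type*} [MeasurableSpace Ω] {μ : Measure Ω} {Y : Ω → ℝ}

theorem survival_nonneg (t : ℝ) : 0 ≤ survival μ Y t := ENNReal.toReal_nonneg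

theorem survival_le_measureReal_univ [IsFiniteMeasure μ] (t : ℝ) :
    survival μ Y t ≤ μ.real univ :=
  ENNReal.toReal_mono (measure_ne_top μ _) (measure_mono (subset_univ _))

theorem antitone_survival [IsFiniteMeasure μ] : Antitone (survival μ Y) :=
  fun _ _ hab => ENNReal.toReal_mono (measure_ne_top μ _)
    (measure_mono fun _ h => hab.trans_lt h)

theorem norm_indicator_survival_le [IsFiniteMeasure μ] (t : ℝ) :
    ‖(Ioi 0).indicator (survival μ Y) t‖ ≤ μ.real univ := by
  refine (norm_indicator_le_norm_self _ _).trans ?_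
  rw [Real.norm_eq_abs, abs_of_nonneg (survival_nonneg t)]
  exact survival_le_measureReal_univ t

theorem intervalIntegrable_indicator_survival [IsFiniteMeasure μ] (a b : ℝ) :
    IntervalIntegrable ((Ioi 0).indicator (survival μ Y)) volume a b := by
  refine (intervalIntegrable_const (c := μ.real univ)).mono_fun
    (antitone_survival.measurable.indicator measurableSet_Ioi).aestronglyMeasurable
    (ae_of_all _ fun t => ?_)
  rw [Real.norm_eq_abs (μ.real univ), abs_of_nonneg measureReal_nonneg]
  exact norm_indicator_survival_le t

theorem cappedPremium_eq_intervalIntegral (x : ℝ) :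
    cappedPremium μ Y x = ∫ t in 0..x, (Ioi 0).indicator (survival μ Y) t := by
  rcases le_total 0 x with hx | hx
  · rw [intervalIntegral.integral_of_le hx, setIntegral_indicator measurableSet_Ioi,
      inter_eq_left.2 Ioc_subset_Ioi_self, cappedPremium]
  · rw [intervalIntegral.integral_of_ge hx, setIntegral_indicator measurableSet_Ioi,
      cappedPremium, Ioc_eq_empty hx.not_gt]
    simp

theorem lipschitzWith_cappedPremium [IsProbabilityMeasure μ] :
    LipschitzWith 1 (cappedPremium μ Y) := by
  refine LipschitzWith.of_dist_le_mul fun x y => ?_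
  rw [Real.dist_eq, Real.dist_eq, cappedPremium_eq_intervalIntegral,
    cappedPremium_eq_intervalIntegral, intervalIntegral.integral_interval_sub_left
      (intervalIntegrable_indicator_survival 0 x) (intervalIntegrable_indicator_survival 0 y),
    NNReal.coe_one, one_mul, ← Real.norm_eq_abs]
  simpa only [one_mul] using intervalIntegral.norm_integral_le_of_norm_le_const (C := 1)
    fun t _ => probReal_univ (μ := μ) ▸ norm_indicator_survival_le (Y := Y) t

theorem hasDerivAt_cappedPremium [IsFiniteMeasure μ] {s : ℝ} (hs : 0 < s)
    (hS : ContinuousAt (survival μ Y) s) :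
    HasDerivAt (cappedPremium μ Y) (survival μ Y s) s := by
  have hq : ContinuousAt ((Ioi 0).indicator (survival μ Y)) s :=
    hS.congr (eventuallyEq_of_mem (Ioi_mem_nhds hs) fun _ ht => (indicator_of_mem ht _).symm)
  have hq_meas : Measurable ((Ioi 0).indicator (survival μ Y)) :=
    antitone_survival.measurable.indicator measurableSet_Ioi
  have h := intervalIntegral.integral_hasDerivAt_right (intervalIntegrable_indicator_survival 0 s)
    hq_meas.stronglyMeasurable.stronglyMeasurableAtFilter hq
  rw [indicator_of_mem (mem_Ioi.2 hs)] at h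
  simpa only [← cappedPremium_eq_intervalIntegral] using h

end Survival

section Density

variable {Ω : Type*} [MeasurableSpace Ω] {μ : Measure Ω} {Y : Ω → ℝ} {p : ℝ → ℝ}

def HasDensityOnIoi (μ : Measure Ω) (Y : Ω → ℝ) (p : ℝ → ℝ) : Prop :=
  μ.map Y = (volume.restrict (Ioi (0:ℝ))).withDensity (fun t => ENNReal.ofReal (p t))

theorem lintegral_ofReal_density_eq_one [IsProbabilityMeasure μ] (hY : Measurable Y)
    (hdens : HasDensityOnIoi μ Y p) :
    ∫⁻ t in Ioi (0:ℝ), ENNReal.ofReal (p t) = 1 := by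
  have h := congrArg (· univ) hdens
  simp only [Measure.map_apply hY MeasurableSet.univ, preimage_univ, measure_univ,
    withDensity_apply _ MeasurableSet.univ, Measure.restrict_univ] at h
  exact h.symm

theorem integrableOn_density [IsProbabilityMeasure μ] (hY : Measurable Y)
    (hdens : HasDensityOnIoi μ Y p)
    (hp : AEStronglyMeasurable p (volume.restrict (Ioi 0))) (hpnn : ∀ t, 0 ≤ p t) :
    IntegrableOn p (Ioi 0) := by
  refine ⟨hp, ?_⟩
  rw [hasFiniteIntegral_iff_ofReal (ae_of_all _ hpnn), lintegral_ofReal_density_eq_one hY hdens]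
  exact ENNReal.one_lt_top

theorem setIntegral_density_eq_one [IsProbabilityMeasure μ] (hY : Measurable Y)
    (hdens : HasDensityOnIoi μ Y p)
    (hp : AEStronglyMeasurable p (volume.restrict (Ioi 0))) (hpnn : ∀ t, 0 ≤ p t) :
    ∫ t in Ioi 0, p t = 1 := by
  rw [integral_eq_lintegral_of_nonneg_ae (ae_of_all _ hpnn) hp,
    lintegral_ofReal_density_eq_one hY hdens, ENNReal.toReal_one]

theorem survival_eq_setIntegral_density (hY : Measurable Y)
    (hdens : HasDensityOnIoi μ Y p)
    (hpint : IntegrableOn p (Ioi 0)) (hpnn : ∀ t, 0 ≤ p t) {u : ℝ} (hu : 0 ≤ u) :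
    survival μ Y u = ∫ t in Ioi u, p t := by
  have hmap : μ {ω | u < Y ω} = μ.map Y (Ioi u) :=
    (Measure.map_apply hY measurableSet_Ioi).symm
  rw [survival, hmap, hdens, withDensity_apply _ measurableSet_Ioi,
    Measure.restrict_restrict measurableSet_Ioi, Ioi_inter_Ioi, sup_eq_left.2 hu,
    ← ofReal_integral_eq_lintegral_ofReal (hpint.mono_set (Ioi_subset_Ioi hu))
      (ae_of_all _ hpnn),
    ENNReal.toReal_ofReal (setIntegral_nonneg measurableSet_Ioi fun t _ => hpnn t)]

theorem setIntegral_Ioc_density [IsProbabilityMeasure μ] (hY : Measurable Y)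
    (hdens : HasDensityOnIoi μ Y p)
    (hpint : IntegrableOn p (Ioi 0)) (hpnn : ∀ t, 0 ≤ p t) {u : ℝ} (hu : 0 ≤ u) :
    ∫ t in Ioc 0 u, p t = 1 - survival μ Y u := by
  rw [survival_eq_setIntegral_density hY hdens hpint hpnn hu,
    ← setIntegral_density_eq_one hY hdens hpint.1 hpnn, ← intervalIntegral.integral_of_le hu,
    intervalIntegral.integral_Ioi_sub_Ioi hpint hu]

theorem continuousAt_survival_of_density (hY : Measurable Y)
    (hdens : HasDensityOnIoi μ Y p)
    (hpint : IntegrableOn p (Ioi 0)) (hpnn : ∀ t, 0 ≤ p t) {s : ℝ} (hs : 0 < s) :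
    ContinuousAt (survival μ Y) s :=
  (hpint.continuousOn_Ici_primitive_Ioi.continuousAt (Ici_mem_nhds hs)).congr
    (eventuallyEq_of_mem (Ioi_mem_nhds hs) fun _ hu =>
      (survival_eq_setIntegral_density hY hdens hpint hpnn (le_of_lt hu)).symm)

theorem integral_comp_eq_setIntegral_density (hY : Measurable Y)
    (hdens : HasDensityOnIoi μ Y p)
    (hp : AEMeasurable p (volume.restrict (Ioi 0))) (hpnn : ∀ t, 0 ≤ p t)
    {g : ℝ → ℝ} (hg : Measurable g) :
    ∫ ω, g (Y ω) ∂μ = ∫ t in Ioi 0, g t * p t := by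
  rw [← integral_map hY.aemeasurable hg.aestronglyMeasurable, hdens,
    integral_withDensity_eq_integral_toReal_smul₀ hp.ennreal_ofReal
      (ae_of_all _ fun _ => ENNReal.ofReal_lt_top)]
  refine integral_congr_ae (ae_of_all _ fun t => ?_)
  simp only [ENNReal.toReal_ofReal (hpnn t), smul_eq_mul, mul_comm]

end Density

section Leibniz

variable {L g : ℝ → ℝ}

theorem lipschitzOnWith_min_div {r : ℝ≥0} (hr : 0 < r) (t : ℝ) :
    LipschitzOnWith r⁻¹ (fun x => min t x / t) (Ici (r : ℝ)) := by
  refine LipschitzOnWith.of_dist_le_mul fun x hx y hy => ?_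
  rw [Real.dist_eq, Real.dist_eq, ← sub_div, abs_div]
  rcases le_or_gt t r with htr | htr
  · rw [min_eq_left (htr.trans hx), min_eq_left (htr.trans hy), sub_self, abs_zero, zero_div]
    positivity
  · calc |min t x - min t y| / |t| ≤ |x - y| / r :=
          div_le_div₀ (abs_nonneg _) (by simpa using abs_min_sub_min_le_max t x t y)
            (NNReal.coe_pos.2 hr) (htr.le.trans (le_abs_self t))
      _ = r⁻¹ * |x - y| := by rw [div_eq_inv_mul, NNReal.coe_inv]

theorem hasDerivAt_comp_min_div_sub (hL : Differentiable ℝ L) {g' s t : ℝ}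
    (hg : HasDerivAt g g' s) (ht : 0 < t) (hts : t ≠ s) :
    HasDerivAt (fun x => L (min t x / t - g x))
      (if t ≤ s then -g' * deriv L (1 - g s) else deriv L (s / t - g s) * (1 / t - g')) s := by
  rcases hts.lt_or_gt with hlt | hgt
  · rw [if_pos hlt.le, mul_comm]
    refine ((hL _).hasDerivAt.comp s (hg.const_sub 1)).congr_of_eventuallyEq ?_
    filter_upwards [Ioi_mem_nhds hlt] with x hx
    rw [Function.comp_apply, min_eq_left hx.le, div_self ht.ne']
  · rw [if_neg hgt.not_ge]
    refine ((hL _).hasDerivAt.comp s (((hasDerivAt_id s).div_const t).sub hg))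
      |>.congr_of_eventuallyEq ?_
    filter_upwards [Iio_mem_nhds hgt] with x hx
    simp only [Function.comp_apply, min_eq_right (mem_Iio.1 hx).le, Pi.sub_apply, id]

theorem exists_lipschitzOnWith_comp_min_div_sub (hL : ContDiff ℝ 1 L) (hg : LocallyLipschitz g)
    {s : ℝ} (hs : 0 < s) :
    ∃ δ > 0, ∃ (K : ℝ≥0) (M : ℝ), ∀ t, 0 < t →
      LipschitzOnWith K (fun x => L (min t x / t - g x)) (ball s δ) ∧
        ‖L (min t s / t - g s)‖ ≤ M := by
  obtain ⟨Kg, U, hU, hgU⟩ := hg s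
  obtain ⟨ε, hε, hεU⟩ := Metric.mem_nhds_iff.1 hU
  set δ := min ε (s / 2)
  have hδ : 0 < δ := lt_min hε (half_pos hs)
  have hball_U : ball s δ ⊆ U := (ball_subset_ball (min_le_left _ _)).trans hεU
  have hball_Ici : ball s δ ⊆ Ici (s / 2) := fun x hx => by
    have := (abs_sub_lt_iff.1 (mem_ball.1 hx)).2
    have := min_le_right ε (s / 2)
    exact mem_Ici.2 (by linarith)
  -- the arguments of `L` stay in a compact interval, on which `L` is Lipschitz and bounded
  set R := |g s| + Kg * δ
  have hmaps (t : ℝ) (ht : 0 < t) :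
      MapsTo (fun x => min t x / t - g x) (ball s δ) (Icc (-R) (1 + R)) := fun x hx => by
    have hx0 : 0 < x := (half_pos hs).trans_le (hball_Ici hx)
    have h0 : 0 ≤ min t x / t := div_nonneg (le_min ht.le hx0.le) ht.le
    have h1 : min t x / t ≤ 1 := (div_le_one ht).2 (min_le_left _ _)
    have hgx : |g x - g s| ≤ Kg * δ :=
      (hgU.dist_le_mul x (hball_U hx) s (hball_U (mem_ball_self hδ))).trans
        (mul_le_mul_of_nonneg_left (mem_ball.1 hx).le Kg.2)
    have := abs_sub_abs_le_abs_sub (g x) (g s)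
    have := neg_abs_le (g x)
    have := le_abs_self (g x)
    exact ⟨by linarith, by linarith⟩
  obtain ⟨KL, hKL⟩ := hL.contDiffOn.exists_lipschitzOnWith one_ne_zero
    (convex_Icc (-R) (1 + R)) isCompact_Icc
  obtain ⟨M, hM⟩ := isCompact_Icc.exists_bound_of_continuousOn (s := Icc (-R) (1 + R))
    hL.continuous.continuousOn
  refine ⟨δ, hδ, KL * ((s / 2).toNNReal⁻¹ + Kg), M, fun t ht => ⟨?_, ?_⟩⟩
  · have hmin := lipschitzOnWith_min_div (Real.toNNReal_pos.2 (half_pos hs)) t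
    rw [Real.coe_toNNReal _ (half_pos hs).le] at hmin
    exact hKL.comp ((hmin.mono hball_Ici).sub (hgU.mono hball_U)) (hmaps t ht)
  · exact hM _ (hmaps t ht (mem_ball_self hδ))

theorem hasDerivAt_setIntegral_comp_min_div_sub_mul {p : ℝ → ℝ} (hp : IntegrableOn p (Ioi 0))
    (hL : ContDiff ℝ 1 L) (hg_lip : LocallyLipschitz g) {g' s : ℝ} (hg : HasDerivAt g g' s)
    (hs : 0 < s) :
    HasDerivAt (fun x => ∫ t in Ioi 0, L (min t x / t - g x) * p t)
      (-g' * deriv L (1 - g s) * (∫ t in Ioc 0 s, p t)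
        + ∫ t in Ioi s, deriv L (s / t - g s) * (1 / t - g') * p t) s := by
  obtain ⟨δ, hδ, K, M, hK⟩ := exists_lipschitzOnWith_comp_min_div_sub hL hg_lip hs
  set F' : ℝ → ℝ := fun t =>
    (if t ≤ s then -g' * deriv L (1 - g s) else deriv L (s / t - g s) * (1 / t - g')) * p t
  have hL_meas : Measurable L := hL.continuous.measurable
  have hL'_meas : Measurable (deriv L) := (hL.continuous_deriv le_rfl).measurable
  have hmeasL (x : ℝ) : Measurable fun t => L (min t x / t - g x) := by fun_prop
  have hmeas (x : ℝ) :
      AEStronglyMeasurable (fun t => L (min t x / t - g x) * p t) (volume.restrict (Ioi 0)) :=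
    (hmeasL x).aestronglyMeasurable.mul hp.1
  have hF'_meas : AEStronglyMeasurable F' (volume.restrict (Ioi 0)) :=
    (Measurable.ite measurableSet_Iic measurable_const (by fun_prop)).aestronglyMeasurable.mul hp.1
  have hint : Integrable (fun t => L (min t s / t - g s) * p t) (volume.restrict (Ioi 0)) :=
    hp.bdd_mul (c := M) (hmeasL s).aestronglyMeasurable
      ((ae_restrict_mem measurableSet_Ioi).mono fun t ht => (hK t ht).2)
  have hlip : ∀ᵐ t ∂volume.restrict (Ioi 0),
      LipschitzOnWith (Real.nnabs (K * |p t|)) (fun x => L (min t x / t - g x) * p t)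
        (ball s δ) := by
    filter_upwards [ae_restrict_mem measurableSet_Ioi] with t ht
    refine LipschitzOnWith.of_dist_le_mul fun x hx y hy => ?_
    have hKt := (hK t ht).1.dist_le_mul x hx y hy
    rw [Real.dist_eq] at hKt ⊢
    rw [← sub_mul, abs_mul, Real.coe_nnabs,
      abs_of_nonneg (mul_nonneg K.coe_nonneg (abs_nonneg (p t))), mul_right_comm]
    exact mul_le_mul_of_nonneg_right hKt (abs_nonneg _)
  have hdiff : ∀ᵐ t ∂volume.restrict (Ioi 0),
      HasDerivAt (fun x => L (min t x / t - g x) * p t) (F' t) s := by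
    filter_upwards [ae_restrict_mem measurableSet_Ioi,
      ae_restrict_of_ae (Measure.ae_ne volume s)] with t ht hts
    exact (hasDerivAt_comp_min_div_sub (hL.differentiable one_ne_zero) hg ht hts).mul_const (p t)
  obtain ⟨hF'_int, h⟩ := hasDerivAt_integral_of_dominated_loc_of_lip (ball_mem_nhds s hδ)
    (Eventually.of_forall hmeas) hint hF'_meas hlip (hp.abs.const_mul K) hdiff
  refine h.congr_deriv ?_
  rw [← Ioc_union_Ioi_eq_Ioi hs.le, setIntegral_union (Ioc_disjoint_Ioi le_rfl)
    measurableSet_Ioi (IntegrableOn.mono_set hF'_int Ioc_subset_Ioi_self)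
    (IntegrableOn.mono_set hF'_int (Ioi_subset_Ioi hs.le)), ← integral_const_mul]
  congr 1
  · exact setIntegral_congr_fun measurableSet_Ioc fun t ht => by simp [F', ht.2]
  · exact setIntegral_congr_fun measurableSet_Ioi fun t ht => by
      simp [F', not_le.2 (mem_Ioi.1 ht)]

end Leibniz

theorem statement7_general {Ω : Type*} [MeasurableSpace Ω]
    (μ : Measure Ω) [IsProbabilityMeasure μ]
    (Y : Ω → ℝ) (hY : Measurable Y)
    (p : ℝ → ℝ) (hpcont : ContinuousOn p (Ioi 0)) (hpnn : ∀ t, 0 ≤ p t)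
    (hdens : μ.map Y
      = (volume.restrict (Ioi (0:ℝ))).withDensity (fun t => ENNReal.ofReal (p t)))
    (L : ℝ → ℝ) (hL : ContDiff ℝ 1 L)
    (f : ℝ → ℝ) (hf : ContDiff ℝ 1 f) :
    ∀ s : ℝ, 0 < s →
      HasDerivAt (cappedObjective μ Y L f)
        (-(survival μ Y s) * deriv f (cappedPremium μ Y s)
            * (1 - survival μ Y s) * deriv L (1 - f (cappedPremium μ Y s))
          + ∫ t in Ioi s,
              deriv L (s / t - f (cappedPremium μ Y s))
                * (1 / t - survival μ Y s * deriv f (cappedPremium μ Y s)) * p t)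
        s := by
  intro s hs
  have hp : AEStronglyMeasurable p (volume.restrict (Ioi 0)) :=
    (hpcont.aemeasurable measurableSet_Ioi).aestronglyMeasurable
  have hpint : IntegrableOn p (Ioi 0) := integrableOn_density hY hdens hp hpnn
  have hπ : HasDerivAt (cappedPremium μ Y) (survival μ Y s) s :=
    hasDerivAt_cappedPremium hs (continuousAt_survival_of_density hY hdens hpint hpnn hs)
  have hfπ : HasDerivAt (fun x => f (cappedPremium μ Y x))
      (survival μ Y s * deriv f (cappedPremium μ Y s)) s := by
    rw [mul_comm]
    exact ((hf.differentiable one_ne_zero) _).hasDerivAt.comp s hπ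
  have hL_meas : Measurable L := hL.continuous.measurable
  have hobj : cappedObjective μ Y L f
      = fun x => ∫ t in Ioi 0, L (min t x / t - f (cappedPremium μ Y x)) * p t :=
    funext fun x => integral_comp_eq_setIntegral_density hY hdens hp.aemeasurable hpnn
      (g := fun t => L (min t x / t - f (cappedPremium μ Y x))) (by fun_prop)
  rw [hobj]
  have hfπ_lip : LocallyLipschitz fun x => f (cappedPremium μ Y x) :=
    hf.locallyLipschitz.comp lipschitzWith_cappedPremium.locallyLipschitz
  refine (hasDerivAt_setIntegral_comp_min_div_sub_mul hpint hL hfπ_lip hfπ hs).congr_deriv ?_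
  rw [setIntegral_Ioc_density hY hdens hpint hpnn hs.le]
  ring

/-- differentiability of the objective `𝔏` of the capped contract and
the formula `𝔏′(s) = −S_Y(s)·f′(π(s))·(1 − S_Y(s))·L′(1 − f(π(s)))
+ ∫_s^∞ L′(s/t − f(π(s)))·[1/t − S_Y(s)·f′(π(s))]·p(t) dt`, for a positive loss `Y`
with continuous density `p` on `(0, ∞)`. -/
theorem statement7 {Ω : Type*} [MeasurableSpace Ω]
    (μ : Measure Ω) [IsProbabilityMeasure μ]
    (Y : Ω → ℝ) (hY : Measurable Y)
    (p : ℝ → ℝ) (hpcont : ContinuousOn p (Ioi 0)) (hpnn : ∀ t, 0 ≤ p t)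
    (hdens : μ.map Y
      = (volume.restrict (Ioi (0:ℝ))).withDensity (fun t => ENNReal.ofReal (p t)))
    (L : ℝ → ℝ) (hL : ContDiff ℝ 1 L) (hLmono : Monotone L)
    (hLbdd : ∃ M, ∀ x, |L x| ≤ M) (hL'bdd : ∃ M, ∀ x, |deriv L x| ≤ M)
    (f : ℝ → ℝ) (hf : ContDiff ℝ 1 f) :
    ∀ s : ℝ, 0 < s →
      HasDerivAt (cappedObjective μ Y L f)
        (-(survival μ Y s) * deriv f (cappedPremium μ Y s)
            * (1 - survival μ Y s) * deriv L (1 - f (cappedPremium μ Y s))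
          + ∫ t in Ioi s,
              deriv L (s / t - f (cappedPremium μ Y s))
                * (1 / t - survival μ Y s * deriv f (cappedPremium μ Y s)) * p t)
        s :=
  statement7_general μ Y hY p hpcont hpnn hdens L hL f hf
end

section
/- (Lipschitz continuity of the objective integrand in the parameter θ.) Let Θ ⊂ ℝ^k be convex, and fix s > 0. Let L, f : ℝ → ℝ be continuously differentiable with |L| ≤ ℓ₀, |L′| ≤ ℓ₁ and |f′| ≤ f₁. Let φ₀ be continuously differentiable with |φ₀| ≤ B₀ and |φ₀′| ≤ B₁, and let φ₁ be measurable and bounded, |φ₁| ≤ B₂. Suppose p : Θ → ℝ is differentiable with ‖∇p(θ)‖ ≤ M₀ for all θ, and for each w the map θ ↦ φ(θ, w) is differentiable with values in [0, x₊] and ‖∇_θ φ(θ, w)‖ ≤ Λ(w). Let γ₋ > 0. Define Φ₁(x, γ) = ∫₀^x v^{1/γ} φ₁(v) dv, Φ₀(x, γ) = 1 − φ₀(x) + Φ₁(x, γ), and Ψ(π, x; S, γ) = L(1 − f(π))·[1 − S·Φ₀(x, γ)]. Then there exists a constant C, depending only on ℓ₀, ℓ₁, f₁, B₀, B₁, B₂,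 M₀, x₊, γ₋, such that for all θ, θ′ ∈ Θ, all w, all S ∈ [0, 1] and all γ ≥ γ₋: |Ψ(p(θ), φ(θ, w); S, γ) − Ψ(p(θ′), φ(θ′, w); S, γ)| ≤ C·(1 + Λ(w))·‖θ − θ′‖. -/
/-!
Write `Ψ(θ) = a(θ) · b(θ)` with `a(θ) = L(1 − f(p θ))` and `b(θ) = 1 − S·Φ₀(φ(θ, w), γ)`.
By the mean value theorem on the convex set `Θ`, `a` is `ℓ₁ f₁ M₀`-Lipschitz and `θ ↦ φ(θ, w)`
is `Λ(w)`-Lipschitz. On `[0, x₊]` the integrand `v^{1/γ} φ₁(v)` of `Φ₁` is bounded by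
`max 1 (x₊^{1/γ₋}) · B₂` uniformly in `γ ≥ γ₋`, so `Φ₀(·, γ)` is bounded and Lipschitz there
uniformly in `γ`. The product rule `ab − a'b' = a(b − b') + (a − a')b'` then gives the bound.
-/

open MeasureTheory Set

lemma abs_sub_le_of_abs_deriv_le {g : ℝ → ℝ} (hg : Differentiable ℝ g) {c : ℝ}
    (hc : ∀ x, |deriv g x| ≤ c) (a b : ℝ) : |g a - g b| ≤ c * |a - b| := by
  simpa only [Real.norm_eq_abs] using convex_univ.norm_image_sub_le_of_norm_deriv_le
    (fun x _ => hg x) (fun x _ => hc x) (mem_univ b) (mem_univ a)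

lemma Convex.abs_sub_le_of_norm_fderivWithin_le {E : Type*} [NormedAddCommGroup E]
    [NormedSpace ℝ E] {s : Set E} (hs : Convex ℝ s) {g : E → ℝ} (hg : DifferentiableOn ℝ g s)
    {C : ℝ} (hC : ∀ x ∈ s, ‖fderivWithin ℝ g s x‖ ≤ C) {x y : E} (hx : x ∈ s) (hy : y ∈ s) :
    |g x - g y| ≤ C * ‖x - y‖ := by
  simpa only [Real.norm_eq_abs] using hs.norm_image_sub_le_of_norm_fderivWithin_le hg hC hy hx

lemma abs_comp_one_sub_sub_le {L f : ℝ → ℝ} (hL : Differentiable ℝ L)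
    (hf : Differentiable ℝ f) {ℓ₁ f₁ : ℝ} (hL' : ∀ x, |deriv L x| ≤ ℓ₁)
    (hf' : ∀ x, |deriv f x| ≤ f₁) (s t : ℝ) :
    |L (1 - f s) - L (1 - f t)| ≤ ℓ₁ * f₁ * |s - t| := by
  have hℓ₁ : 0 ≤ ℓ₁ := (abs_nonneg _).trans (hL' 0)
  calc |L (1 - f s) - L (1 - f t)| ≤ ℓ₁ * |f s - f t| := by
        simpa [abs_sub_comm] using abs_sub_le_of_abs_deriv_le hL hL' (1 - f s) (1 - f t)
    _ ≤ ℓ₁ * (f₁ * |s - t|) := by gcongr; exact abs_sub_le_of_abs_deriv_le hf hf' s t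
    _ = ℓ₁ * f₁ * |s - t| := by ring

lemma abs_one_sub_mul_le {S u : ℝ} (hS : S ∈ Icc 0 1) : |1 - S * u| ≤ 1 + |u| := by
  calc |1 - S * u| ≤ |1| + |S| * |u| := by rw [← abs_mul]; exact abs_sub _ _
    _ ≤ 1 + 1 * |u| := by rw [abs_one, abs_of_nonneg hS.1]; gcongr; exact hS.2
    _ = 1 + |u| := by rw [one_mul]

lemma abs_one_sub_mul_sub_one_sub_mul_le {S u v : ℝ} (hS : S ∈ Icc 0 1) :
    |(1 - S * u) - (1 - S * v)| ≤ |u - v| := by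
  rw [show 1 - S * u - (1 - S * v) = -(S * (u - v)) by ring, abs_neg, abs_mul,
    abs_of_nonneg hS.1]
  exact mul_le_of_le_one_left (abs_nonneg _) hS.2

lemma abs_mul_sub_mul_le_mul_one_add {a a' b b' A B α β c d : ℝ} (ha : |a| ≤ A)
    (hb' : |b'| ≤ B) (haa' : |a - a'| ≤ α * d) (hbb' : |b - b'| ≤ β * (c * d))
    (hα : 0 ≤ α) (hβ : 0 ≤ β) (hc : 0 ≤ c) (hd : 0 ≤ d) :
    |a * b - a' * b'| ≤ (A * β + α * B) * (1 + c) * d := by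
  have hA : 0 ≤ A := (abs_nonneg a).trans ha
  have hB : 0 ≤ B := (abs_nonneg b').trans hb'
  calc |a * b - a' * b'| = |a * (b - b') + (a - a') * b'| := by ring_nf
    _ ≤ |a| * |b - b'| + |a - a'| * |b'| := by
        rw [← abs_mul, ← abs_mul]; exact abs_add_le _ _
    _ ≤ A * (β * (c * d)) + α * d * B := by gcongr
    _ ≤ (A * β + α * B) * (1 + c) * d := by
        have : 0 ≤ A * β * d + α * B * (c * d) := by positivity
        linarith

lemma rpow_le_max_one_rpow {v x r s : ℝ} (hv : 0 ≤ v) (hvx : v ≤ x) (hr : 0 ≤ r)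
    (hrs : r ≤ s) : v ^ r ≤ max 1 (x ^ s) := by
  rcases le_or_gt v 1 with hv1 | hv1
  · exact (Real.rpow_le_one hv hv1 hr).trans (le_max_left _ _)
  · calc v ^ r ≤ v ^ s := Real.rpow_le_rpow_of_exponent_le hv1.le hrs
      _ ≤ x ^ s := Real.rpow_le_rpow hv hvx (hr.trans hrs)
      _ ≤ max 1 (x ^ s) := le_max_right _ _

lemma abs_integral_Ioc_zero_sub_le {g : ℝ → ℝ} (hg : AEStronglyMeasurable g) {M x a b : ℝ}
    (hgM : ∀ v ∈ Ioc 0 x, |g v| ≤ M) (ha : a ∈ Icc 0 x) (hb : b ∈ Icc 0 x) :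
    |(∫ v in Ioc 0 a, g v) - ∫ v in Ioc 0 b, g v| ≤ M * |a - b| := by
  have hint : IntegrableOn g (Ioc 0 x) :=
    Measure.integrableOn_of_bounded (M := M) (by simp) hg
      ((ae_restrict_mem measurableSet_Ioc).mono hgM)
  have hint' {c : ℝ} (hc : c ∈ Icc 0 x) : IntervalIntegrable g volume 0 c :=
    (intervalIntegrable_iff_integrableOn_Ioc_of_le hc.1).2 <|
      hint.mono_set (Ioc_subset_Ioc_right hc.2)
  rw [← intervalIntegral.integral_of_le ha.1, ← intervalIntegral.integral_of_le hb.1,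
    intervalIntegral.integral_interval_sub_left (hint' ha) (hint' hb), ← Real.norm_eq_abs]
  refine intervalIntegral.norm_integral_le_of_norm_le_const fun v hv => ?_
  rw [Real.norm_eq_abs]
  exact hgM v ⟨(le_min hb.1 ha.1).trans_lt hv.1, hv.2.trans (max_le hb.2 ha.2)⟩

/-- The paper's `Φ₀(x, γ) = 1 − φ₀(x) + Φ₁(x, γ)`, with `Φ₁(x, γ) = ∫₀^x v^{1/γ} φ₁(v) dv`. -/
noncomputable def Phi0 (φ₀ φ₁ : ℝ → ℝ) (γ x : ℝ) : ℝ :=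
  1 - φ₀ x + ∫ v in Ioc 0 x, v ^ (1 / γ) * φ₁ v

section Phi0

variable {φ₀ φ₁ : ℝ → ℝ} {B₀ B₁ B₂ xhi γlo γ : ℝ}

lemma abs_rpow_one_div_mul_le (hφ₁b : ∀ x, |φ₁ x| ≤ B₂) (hγlo : 0 < γlo) (hγ : γlo ≤ γ)
    {v : ℝ} (hv : v ∈ Ioc 0 xhi) :
    |v ^ (1 / γ) * φ₁ v| ≤ max 1 (xhi ^ (1 / γlo)) * B₂ := by
  rw [abs_mul, abs_of_nonneg (Real.rpow_nonneg hv.1.le _)]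
  exact mul_le_mul (rpow_le_max_one_rpow hv.1.le hv.2 (one_div_pos.2 (hγlo.trans_le hγ)).le
    (one_div_le_one_div_of_le hγlo hγ)) (hφ₁b v) (abs_nonneg _) (by positivity)

lemma abs_Phi0_sub_le (hφ₀ : Differentiable ℝ φ₀) (hφ₀' : ∀ x, |deriv φ₀ x| ≤ B₁)
    (hφ₁ : Measurable φ₁) (hφ₁b : ∀ x, |φ₁ x| ≤ B₂) (hγlo : 0 < γlo) (hγ : γlo ≤ γ)
    {x y : ℝ} (hx : x ∈ Icc 0 xhi) (hy : y ∈ Icc 0 xhi) :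
    |Phi0 φ₀ φ₁ γ x - Phi0 φ₀ φ₁ γ y| ≤ (B₁ + max 1 (xhi ^ (1 / γlo)) * B₂) * |x - y| := by
  have hφ₀xy := abs_sub_le_of_abs_deriv_le hφ₀ hφ₀' y x
  have hint := abs_integral_Ioc_zero_sub_le (by fun_prop : Measurable _).aestronglyMeasurable
    (fun v hv => abs_rpow_one_div_mul_le hφ₁b hγlo hγ hv) hx hy
  calc |Phi0 φ₀ φ₁ γ x - Phi0 φ₀ φ₁ γ y|
      = |(φ₀ y - φ₀ x) + ((∫ v in Ioc 0 x, v ^ (1 / γ) * φ₁ v)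
          - ∫ v in Ioc 0 y, v ^ (1 / γ) * φ₁ v)| := by unfold Phi0; congr 1; ring
    _ ≤ B₁ * |y - x| + max 1 (xhi ^ (1 / γlo)) * B₂ * |x - y| :=
        (abs_add_le _ _).trans (add_le_add hφ₀xy hint)
    _ = (B₁ + max 1 (xhi ^ (1 / γlo)) * B₂) * |x - y| := by rw [abs_sub_comm y x]; ring

lemma abs_Phi0_le (hφ₀b : ∀ x, |φ₀ x| ≤ B₀) (hφ₁ : Measurable φ₁) (hφ₁b : ∀ x, |φ₁ x| ≤ B₂)
    (hγlo : 0 < γlo) (hγ : γlo ≤ γ) {x : ℝ} (hx : x ∈ Icc 0 xhi) :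
    |Phi0 φ₀ φ₁ γ x| ≤ 1 + B₀ + max 1 (xhi ^ (1 / γlo)) * B₂ * xhi := by
  have hB₂ : 0 ≤ B₂ := (abs_nonneg _).trans (hφ₁b 0)
  have hint := abs_integral_Ioc_zero_sub_le (by fun_prop : Measurable _).aestronglyMeasurable
    (fun v hv => abs_rpow_one_div_mul_le hφ₁b hγlo hγ hv) hx ⟨le_rfl, hx.1.trans hx.2⟩
  rw [Ioc_self, Measure.restrict_empty, integral_zero_measure, sub_zero, sub_zero,
    abs_of_nonneg hx.1] at hint
  calc |Phi0 φ₀ φ₁ γ x| ≤ |1| + |φ₀ x| + |∫ v in Ioc 0 x, v ^ (1 / γ) * φ₁ v| :=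
        (abs_add_le _ _).trans (add_le_add_left (abs_sub _ _) _)
    _ ≤ 1 + B₀ + max 1 (xhi ^ (1 / γlo)) * B₂ * xhi := by
        rw [abs_one]
        gcongr
        · exact hφ₀b x
        · exact hint.trans (by gcongr; exact hx.2)

end Phi0

/-- Lipschitz continuity of the objective integrand
`Ψ(π, x; S, γ) = L(1 − f(π))·[1 − S·Φ₀(x, γ)]` in the parameter `θ`, where
`Φ₀(x, γ) = 1 − φ₀(x) + ∫₀^x v^{1/γ} φ₁(v) dv`: there is a constant `C` (depending
only on the bounds) such that for all `θ, θ′ ∈ Θ`, all `w`, all `S ∈ [0,1]` and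
`γ ≥ γ₋`, `|Ψ(p(θ), φ(θ,w); S, γ) − Ψ(p(θ′), φ(θ′,w); S, γ)| ≤ C(1 + Λ(w))‖θ − θ′‖`. -/
theorem statement12 {k : ℕ} {D : Type*}
    (Θ : Set (Fin k → ℝ)) (hΘ : Convex ℝ Θ)
    (L f : ℝ → ℝ) (hL : ContDiff ℝ 1 L) (hf : ContDiff ℝ 1 f)
    (ℓ₀ ℓ₁ f₁ : ℝ) (hLb : ∀ x, |L x| ≤ ℓ₀) (hL'b : ∀ x, |deriv L x| ≤ ℓ₁)
    (hf'b : ∀ x, |deriv f x| ≤ f₁)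
    (φ₀ : ℝ → ℝ) (hφ₀ : ContDiff ℝ 1 φ₀) (B₀ B₁ B₂ : ℝ)
    (hφ₀b : ∀ x, |φ₀ x| ≤ B₀) (hφ₀'b : ∀ x, |deriv φ₀ x| ≤ B₁)
    (φ₁ : ℝ → ℝ) (hφ₁meas : Measurable φ₁) (hφ₁b : ∀ x, |φ₁ x| ≤ B₂)
    (p : (Fin k → ℝ) → ℝ) (M₀ : ℝ)
    (hp : DifferentiableOn ℝ p Θ)
    (hpb : ∀ θ ∈ Θ, ‖fderivWithin ℝ p Θ θ‖ ≤ M₀)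
    (φ : (Fin k → ℝ) → D → ℝ) (xhi : ℝ) (Λ : D → ℝ)
    (hφdiff : ∀ w, DifferentiableOn ℝ (fun θ => φ θ w) Θ)
    (hφrange : ∀ θ ∈ Θ, ∀ w, φ θ w ∈ Icc (0:ℝ) xhi)
    (hφgrad : ∀ w, ∀ θ ∈ Θ, ‖fderivWithin ℝ (fun θ' => φ θ' w) Θ θ‖ ≤ Λ w)
    (γlo : ℝ) (hγlo : 0 < γlo) :
    ∃ C : ℝ, ∀ θ ∈ Θ, ∀ θ' ∈ Θ, ∀ w : D, ∀ S ∈ Icc (0:ℝ) 1, ∀ γ : ℝ, γlo ≤ γ →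
      |L (1 - f (p θ)) *
          (1 - S * (1 - φ₀ (φ θ w) + ∫ v in Ioc (0:ℝ) (φ θ w), v ^ (1 / γ) * φ₁ v))
        - L (1 - f (p θ')) *
          (1 - S * (1 - φ₀ (φ θ' w) + ∫ v in Ioc (0:ℝ) (φ θ' w), v ^ (1 / γ) * φ₁ v))|
      ≤ C * (1 + Λ w) * ‖θ - θ'‖ := by
  set K := max 1 (xhi ^ (1 / γlo))
  refine ⟨ℓ₀ * (B₁ + K * B₂) + ℓ₁ * f₁ * M₀ * (1 + (1 + B₀ + K * B₂ * xhi)),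
    fun θ hθ θ' hθ' w S hS γ hγ => ?_⟩
  have hx := hφrange θ hθ w
  have hx' := hφrange θ' hθ' w
  have hK : 0 ≤ K := zero_le_one.trans (le_max_left _ _)
  have hB₁ : 0 ≤ B₁ := (abs_nonneg _).trans (hφ₀'b 0)
  have hB₂ : 0 ≤ B₂ := (abs_nonneg _).trans (hφ₁b 0)
  have hℓ₁ : 0 ≤ ℓ₁ := (abs_nonneg _).trans (hL'b 0)
  have hf₁ : 0 ≤ f₁ := (abs_nonneg _).trans (hf'b 0)
  have hM₀ : 0 ≤ M₀ := (norm_nonneg _).trans (hpb θ hθ)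
  have ha : |L (1 - f (p θ)) - L (1 - f (p θ'))| ≤ ℓ₁ * f₁ * M₀ * ‖θ - θ'‖ := by
    refine (abs_comp_one_sub_sub_le (hL.differentiable one_ne_zero)
      (hf.differentiable one_ne_zero) hL'b hf'b _ _).trans ?_
    rw [mul_assoc _ M₀]
    gcongr
    exact hΘ.abs_sub_le_of_norm_fderivWithin_le hp hpb hθ hθ'
  have hb : |(1 - S * Phi0 φ₀ φ₁ γ (φ θ w)) - (1 - S * Phi0 φ₀ φ₁ γ (φ θ' w))|
      ≤ (B₁ + K * B₂) * (Λ w * ‖θ - θ'‖) :=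
    (abs_one_sub_mul_sub_one_sub_mul_le hS).trans <|
      (abs_Phi0_sub_le (hφ₀.differentiable one_ne_zero) hφ₀'b hφ₁meas hφ₁b hγlo hγ hx hx').trans
      (mul_le_mul_of_nonneg_left
        (hΘ.abs_sub_le_of_norm_fderivWithin_le (hφdiff w) (hφgrad w) hθ hθ') (by positivity))
  have hb' : |1 - S * Phi0 φ₀ φ₁ γ (φ θ' w)| ≤ 1 + (1 + B₀ + K * B₂ * xhi) :=
    (abs_one_sub_mul_le hS).trans
      (add_le_add_right (abs_Phi0_le hφ₀b hφ₁meas hφ₁b hγlo hγ hx') 1)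
  exact abs_mul_sub_mul_le_mul_one_add (hLb _) hb' ha hb (by positivity) (by positivity)
    ((norm_nonneg _).trans (hφgrad w θ hθ)) (norm_nonneg _)
end

section
/- (Lipschitz continuity of the objective integrand in the nuisance functions S and γ.) Let L, f : ℝ → ℝ, let φ₀ be a function with |φ₀| ≤ B₀, and let φ₁ be measurable. Fix 0 < γ₋ ≤ γ₊ < ∞ and M > 0, and assume K := ∫₀^∞ max(v^{1/γ₊}, v^{1/γ₋})·(1 + |ln v|)·|φ₁(v)| dv < ∞. Define Φ₁(x, γ) = ∫₀^x v^{1/γ} φ₁(v) dv, Φ₀(x, γ) = 1 − φ₀(x) + Φ₁(x, γ), and Ψ(π, x; S, γ) = L(1 − f(π))·[1 − S·Φ₀(x, γ)]. Then for all π ∈ ℝ, x ∈ [0, M], S, S′ ∈ [0, 1] and γ, γ′ ∈ [γ₋, γ₊]: |Ψ(π, x; S′, γ′) − Ψ(π, x; S, γ)| ≤ |L(1 − f(π))|·[(1 + B₀ + K)·|S′ − S| + K·|1/γ′ − 1/γ|]. -/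
open MeasureTheory Set

lemma aux_exp_lip (x y : ℝ) :
    |Real.exp x - Real.exp y| ≤ |x - y| * max (Real.exp x) (Real.exp y) := by
  wlog h : y ≤ x with H
  · have := H y x (le_of_not_ge h)
    rwa [abs_sub_comm, abs_sub_comm y x, max_comm] at this
  rw [abs_of_nonneg (sub_nonneg.2 (Real.exp_le_exp.2 h)),
    abs_of_nonneg (sub_nonneg.2 h), max_eq_left (Real.exp_le_exp.2 h)]
  have h2 : Real.exp x * ((y - x) + 1) ≤ Real.exp y := by
    have := Real.add_one_le_exp (y - x)
    have hx := (Real.exp_pos x).le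
    calc Real.exp x * ((y - x) + 1) ≤ Real.exp x * Real.exp (y - x) := by
          exact mul_le_mul_of_nonneg_left this hx
      _ = Real.exp y := by rw [← Real.exp_add]; ring_nf
  nlinarith [Real.exp_pos x]

lemma aux_rpow_lip {v : ℝ} (hv : 0 < v) (a b : ℝ) :
    |v ^ a - v ^ b| ≤ |a - b| * |Real.log v| * max (v ^ a) (v ^ b) := by
  rw [Real.rpow_def_of_pos hv, Real.rpow_def_of_pos hv]
  have h := aux_exp_lip (Real.log v * a) (Real.log v * b)
  have e : |Real.log v * a - Real.log v * b| = |a - b| * |Real.log v| := by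
    rw [← mul_sub, abs_mul, mul_comm]
  rwa [e] at h

/-- Lipschitz continuity of the objective integrand
`Ψ(π, x; S, γ) = L(1 − f(π))·[1 − S·Φ₀(x, γ)]` in the nuisance quantities `S` and
`γ`, where `Φ₀(x, γ) = 1 − φ₀(x) + ∫₀^x v^{1/γ} φ₁(v) dv`: with
`K = ∫₀^∞ max(v^{1/γ₊}, v^{1/γ₋})·(1 + |ln v|)·|φ₁(v)| dv < ∞`, one has
`|Ψ(π, x; S′, γ′) − Ψ(π, x; S, γ)|
  ≤ |L(1 − f(π))|·[(1 + B₀ + K)|S′ − S| + K|1/γ′ − 1/γ|]`. -/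
theorem statement13 (L f : ℝ → ℝ)
    (φ₀ : ℝ → ℝ) (B₀ : ℝ) (hφ₀b : ∀ x, |φ₀ x| ≤ B₀)
    (φ₁ : ℝ → ℝ) (hφ₁meas : Measurable φ₁)
    (γlo γhi M : ℝ) (hγlo : 0 < γlo) (hγ : γlo ≤ γhi) (hM : 0 < M)
    (hK : IntegrableOn
      (fun v => max (v ^ (1 / γhi)) (v ^ (1 / γlo)) * (1 + |Real.log v|) * |φ₁ v|)
      (Ioi 0) volume) :
    ∀ π : ℝ, ∀ x ∈ Icc (0:ℝ) M, ∀ S ∈ Icc (0:ℝ) 1, ∀ S' ∈ Icc (0:ℝ) 1,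
      ∀ γ ∈ Icc γlo γhi, ∀ γ' ∈ Icc γlo γhi,
      |L (1 - f π) *
          (1 - S' * (1 - φ₀ x + ∫ v in Ioc (0:ℝ) x, v ^ (1 / γ') * φ₁ v))
        - L (1 - f π) *
          (1 - S * (1 - φ₀ x + ∫ v in Ioc (0:ℝ) x, v ^ (1 / γ) * φ₁ v))|
      ≤ |L (1 - f π)| *
          ((1 + B₀ +
              (∫ v in Ioi (0:ℝ),
                max (v ^ (1 / γhi)) (v ^ (1 / γlo)) * (1 + |Real.log v|) * |φ₁ v|))
            * |S' - S|
          + (∫ v in Ioi (0:ℝ),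
              max (v ^ (1 / γhi)) (v ^ (1 / γlo)) * (1 + |Real.log v|) * |φ₁ v|)
            * |1 / γ' - 1 / γ|) := by
  intro π x hx S hS S' hS' γ hγm γ' hγ'm
  set g : ℝ → ℝ :=
    fun v => max (v ^ (1 / γhi)) (v ^ (1 / γlo)) * (1 + |Real.log v|) * |φ₁ v| with hg
  set K : ℝ := ∫ v in Ioi (0:ℝ), g v with hKdef
  have hγhi : 0 < γhi := lt_of_lt_of_le hγlo hγ
  -- nonnegativity of g on Ioi 0
  have hgnn : ∀ v ∈ Ioi (0:ℝ), 0 ≤ g v := by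
    intro v hv
    have hv' : (0:ℝ) < v := hv
    have h1 : (0:ℝ) ≤ max (v ^ (1 / γhi)) (v ^ (1 / γlo)) :=
      le_trans (Real.rpow_nonneg hv'.le _) (le_max_left _ _)
    have h2 : (0:ℝ) ≤ 1 + |Real.log v| := by positivity
    exact mul_nonneg (mul_nonneg h1 h2) (abs_nonneg _)
  have hK0 : 0 ≤ K := setIntegral_nonneg measurableSet_Ioi hgnn
  -- exponents in range give rpow bounded by the max
  have hmax : ∀ a : ℝ, 1 / γhi ≤ a → a ≤ 1 / γlo → ∀ v : ℝ, 0 < v →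
      v ^ a ≤ max (v ^ (1 / γhi)) (v ^ (1 / γlo)) := by
    intro a ha1 ha2 v hv
    rcases le_or_gt 1 v with h1 | h1
    · exact le_trans (Real.rpow_le_rpow_of_exponent_le h1 ha2) (le_max_right _ _)
    · exact le_trans (Real.rpow_le_rpow_of_exponent_ge hv h1.le ha1) (le_max_left _ _)
  have hrange : ∀ γ'' ∈ Icc γlo γhi, 1 / γhi ≤ 1 / γ'' ∧ 1 / γ'' ≤ 1 / γlo := by
    intro γ'' hγ''
    constructor
    · exact one_div_le_one_div_of_le (lt_of_lt_of_le hγlo hγ''.1) hγ''.2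
    · exact one_div_le_one_div_of_le hγlo hγ''.1
  have hsub : Ioc (0:ℝ) x ⊆ Ioi 0 := Ioc_subset_Ioi_self
  have hgIoc : IntegrableOn g (Ioc (0:ℝ) x) volume := hK.mono_set hsub
  -- pointwise bound for the integrand
  have hptw : ∀ γ'' ∈ Icc γlo γhi, ∀ v ∈ Ioc (0:ℝ) x,
      |v ^ (1 / γ'') * φ₁ v| ≤ g v := by
    intro γ'' hγ'' v hv
    have hv0 : (0:ℝ) < v := hv.1
    have hm := hmax (1 / γ'') (hrange γ'' hγ'').1 (hrange γ'' hγ'').2 v hv0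
    have h1 : |v ^ (1 / γ'')| = v ^ (1 / γ'') := abs_of_nonneg (Real.rpow_nonneg hv0.le _)
    rw [abs_mul, h1]
    calc v ^ (1 / γ'') * |φ₁ v|
        ≤ max (v ^ (1 / γhi)) (v ^ (1 / γlo)) * |φ₁ v| :=
          mul_le_mul_of_nonneg_right hm (abs_nonneg _)
      _ ≤ max (v ^ (1 / γhi)) (v ^ (1 / γlo)) * (1 + |Real.log v|) * |φ₁ v| := by
          have h3 : (0:ℝ) ≤ max (v ^ (1 / γhi)) (v ^ (1 / γlo)) :=
            le_trans (Real.rpow_nonneg hv0.le _) (le_max_left _ _)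
          nlinarith [mul_nonneg (mul_nonneg h3 (abs_nonneg (Real.log v))) (abs_nonneg (φ₁ v))]
  -- integrability of the integrands
  have hint : ∀ γ'' ∈ Icc γlo γhi,
      IntegrableOn (fun v => v ^ (1 / γ'') * φ₁ v) (Ioc (0:ℝ) x) volume := by
    intro γ'' hγ''
    refine Integrable.mono hgIoc ?_ ?_
    · exact ((measurable_id.pow_const _).mul hφ₁meas).aestronglyMeasurable
    · filter_upwards [ae_restrict_mem measurableSet_Ioc] with v hv
      rw [Real.norm_eq_abs, Real.norm_eq_abs, abs_of_nonneg (hgnn v (hsub hv))]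
      exact hptw γ'' hγ'' v hv
  have hIocK : (∫ v in Ioc (0:ℝ) x, g v) ≤ K := by
    refine setIntegral_mono_set hK ?_ (HasSubset.Subset.eventuallyLE hsub)
    filter_upwards [ae_restrict_mem measurableSet_Ioi] with v hv using hgnn v hv
  -- bound on the integral itself
  have hIle : ∀ γ'' ∈ Icc γlo γhi, |∫ v in Ioc (0:ℝ) x, v ^ (1 / γ'') * φ₁ v| ≤ K := by
    intro γ'' hγ''
    calc |∫ v in Ioc (0:ℝ) x, v ^ (1 / γ'') * φ₁ v|
        ≤ ∫ v in Ioc (0:ℝ) x, ‖v ^ (1 / γ'') * φ₁ v‖ := by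
          rw [← Real.norm_eq_abs]; exact norm_integral_le_integral_norm _
      _ ≤ ∫ v in Ioc (0:ℝ) x, g v := by
          refine integral_mono_of_nonneg ?_ hgIoc ?_
          · filter_upwards with v using norm_nonneg _
          · filter_upwards [ae_restrict_mem measurableSet_Ioc] with v hv
            simpa [Real.norm_eq_abs, abs_mul] using hptw γ'' hγ'' v hv
      _ ≤ K := hIocK
  -- bound on the difference of integrals
  have hdiff : |(∫ v in Ioc (0:ℝ) x, v ^ (1 / γ') * φ₁ v)
      - ∫ v in Ioc (0:ℝ) x, v ^ (1 / γ) * φ₁ v| ≤ K * |1 / γ' - 1 / γ| := by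
    rw [← integral_sub (hint γ' hγ'm) (hint γ hγm)]
    have hbd : ∀ v ∈ Ioc (0:ℝ) x,
        |v ^ (1 / γ') * φ₁ v - v ^ (1 / γ) * φ₁ v| ≤ |1 / γ' - 1 / γ| * g v := by
      intro v hv
      have hv0 : (0:ℝ) < v := hv.1
      have key := aux_rpow_lip hv0 (1 / γ') (1 / γ)
      have hmm : max (v ^ (1 / γ')) (v ^ (1 / γ)) ≤
          max (v ^ (1 / γhi)) (v ^ (1 / γlo)) :=
        max_le (hmax _ (hrange γ' hγ'm).1 (hrange γ' hγ'm).2 v hv0)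
          (hmax _ (hrange γ hγm).1 (hrange γ hγm).2 v hv0)
      have e : v ^ (1 / γ') * φ₁ v - v ^ (1 / γ) * φ₁ v
          = (v ^ (1 / γ') - v ^ (1 / γ)) * φ₁ v := by ring
      rw [e, abs_mul]
      have hMnn : (0:ℝ) ≤ max (v ^ (1 / γhi)) (v ^ (1 / γlo)) :=
        le_trans (Real.rpow_nonneg hv0.le _) (le_max_left _ _)
      have step : |v ^ (1 / γ') - v ^ (1 / γ)|
          ≤ |1 / γ' - 1 / γ| * (max (v ^ (1 / γhi)) (v ^ (1 / γlo)) * (1 + |Real.log v|)) := by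
        refine key.trans ?_
        have h1 : |Real.log v| * max (v ^ (1 / γ')) (v ^ (1 / γ))
            ≤ max (v ^ (1 / γhi)) (v ^ (1 / γlo)) * (1 + |Real.log v|) := by
          have h2 : max (v ^ (1 / γ')) (v ^ (1 / γ)) ≤
              max (v ^ (1 / γhi)) (v ^ (1 / γlo)) := hmm
          nlinarith [abs_nonneg (Real.log v),
            le_trans (Real.rpow_nonneg hv0.le (1 / γ')) (le_max_left (v ^ (1/γ')) (v ^ (1/γ)))]
        calc |1 / γ' - 1 / γ| * |Real.log v| * max (v ^ (1 / γ')) (v ^ (1 / γ))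
            = |1 / γ' - 1 / γ| * (|Real.log v| * max (v ^ (1 / γ')) (v ^ (1 / γ))) := by ring
          _ ≤ |1 / γ' - 1 / γ| * (max (v ^ (1 / γhi)) (v ^ (1 / γlo)) * (1 + |Real.log v|)) :=
              mul_le_mul_of_nonneg_left h1 (abs_nonneg _)
      calc |v ^ (1 / γ') - v ^ (1 / γ)| * |φ₁ v|
          ≤ (|1 / γ' - 1 / γ| * (max (v ^ (1 / γhi)) (v ^ (1 / γlo)) * (1 + |Real.log v|)))
              * |φ₁ v| := mul_le_mul_of_nonneg_right step (abs_nonneg _)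
        _ = |1 / γ' - 1 / γ| * g v := by rw [hg]; ring
    calc |∫ v in Ioc (0:ℝ) x, (v ^ (1 / γ') * φ₁ v - v ^ (1 / γ) * φ₁ v)|
        ≤ ∫ v in Ioc (0:ℝ) x, ‖v ^ (1 / γ') * φ₁ v - v ^ (1 / γ) * φ₁ v‖ := by
          rw [← Real.norm_eq_abs]; exact norm_integral_le_integral_norm _
      _ ≤ ∫ v in Ioc (0:ℝ) x, |1 / γ' - 1 / γ| * g v := by
          refine integral_mono_of_nonneg ?_ (hgIoc.const_mul _) ?_
          · filter_upwards with v using norm_nonneg _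
          · filter_upwards [ae_restrict_mem measurableSet_Ioc] with v hv
            simpa [Real.norm_eq_abs] using hbd v hv
      _ = |1 / γ' - 1 / γ| * ∫ v in Ioc (0:ℝ) x, g v := integral_const_mul _ _
      _ ≤ |1 / γ' - 1 / γ| * K := mul_le_mul_of_nonneg_left hIocK (abs_nonneg _)
      _ = K * |1 / γ' - 1 / γ| := mul_comm _ _
  -- final algebra
  set Iγ := ∫ v in Ioc (0:ℝ) x, v ^ (1 / γ) * φ₁ v with hIγ
  set Iγ' := ∫ v in Ioc (0:ℝ) x, v ^ (1 / γ') * φ₁ v with hIγ'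
  have hΦ' : |1 - φ₀ x + Iγ'| ≤ 1 + B₀ + K := by
    have h1 : |1 - φ₀ x| ≤ 1 + B₀ := by
      have := hφ₀b x
      have := abs_sub (1:ℝ) (φ₀ x)
      calc |1 - φ₀ x| ≤ |(1:ℝ)| + |φ₀ x| := abs_sub _ _
        _ ≤ 1 + B₀ := by rw [abs_one]; linarith [hφ₀b x]
    calc |1 - φ₀ x + Iγ'| ≤ |1 - φ₀ x| + |Iγ'| := abs_add_le _ _
      _ ≤ 1 + B₀ + K := add_le_add h1 (hIle γ' hγ'm)
  have hSbd : |S| ≤ 1 := by rw [abs_of_nonneg hS.1]; exact hS.2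
  have key : |S * (1 - φ₀ x + Iγ) - S' * (1 - φ₀ x + Iγ')|
      ≤ (1 + B₀ + K) * |S' - S| + K * |1 / γ' - 1 / γ| := by
    have e : S * (1 - φ₀ x + Iγ) - S' * (1 - φ₀ x + Iγ')
        = (S - S') * (1 - φ₀ x + Iγ') + S * (Iγ - Iγ') := by ring
    rw [e]
    calc |(S - S') * (1 - φ₀ x + Iγ') + S * (Iγ - Iγ')|
        ≤ |(S - S') * (1 - φ₀ x + Iγ')| + |S * (Iγ - Iγ')| := abs_add_le _ _
      _ = |S - S'| * |1 - φ₀ x + Iγ'| + |S| * |Iγ - Iγ'| := by rw [abs_mul, abs_mul]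
      _ ≤ |S - S'| * (1 + B₀ + K) + 1 * (K * |1 / γ' - 1 / γ|) := by
          refine add_le_add (mul_le_mul_of_nonneg_left hΦ' (abs_nonneg _)) ?_
          refine mul_le_mul hSbd ?_ (abs_nonneg _) zero_le_one
          rw [abs_sub_comm]; exact hdiff
      _ = (1 + B₀ + K) * |S' - S| + K * |1 / γ' - 1 / γ| := by
          rw [abs_sub_comm S S']; ring
  calc |L (1 - f π) * (1 - S' * (1 - φ₀ x + Iγ')) - L (1 - f π) * (1 - S * (1 - φ₀ x + Iγ))|
      = |L (1 - f π)| * |S * (1 - φ₀ x + Iγ) - S' * (1 - φ₀ x + Iγ')| := by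
        rw [← abs_mul]; ring_nf
    _ ≤ |L (1 - f π)| * ((1 + B₀ + K) * |S' - S| + K * |1 / γ' - 1 / γ|) :=
        mul_le_mul_of_nonneg_left key (abs_nonneg _)
end
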